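/- Lemma (generator coupling via Stein's method). For any policy in the model, let η = λ + k·Δ, h(x) = max{x − η, 0}, let g : ℝ → ℝ be given by g(x) = 0 for x ≤ η and g(x) = −(x − η)²/(2Δ) for x > η (so g′(x) = −max{x − η, 0}/Δ), and set D_1 = ∑_{m=1}^M (1 − p_m)·μ_m·S_{1,m}. Then 𝔼[ h(∑_{i=1}^b S_i) ] ≤ J_1 + (5·μ_max + λ)/(√N·log N), where J_1 = 𝔼[ g′(∑_{i=1}^b S_i)·(λ·A_b(S) − λ − Δ + D_1)·1{∑_{i=1}^b S_i > η + 1/N} ]. -/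

import Mathlib

open Finset
open scoped Classical

noncomputable section

/-- `coxV μ p m` is the mean time `v_m` spent in phase `m` of a Coxian distribution. -/
def coxV (μ p : ℕ → ℝ) (m : ℕ) : ℝ := (∏ i ∈ Finset.Icc 1 (m - 1), p i) / μ m

/-- The constant `a_m = μ_m / (p_1 μ_1 + μ_m)`. -/
def coxA (μ p : ℕ → ℝ) (m : ℕ) : ℝ := μ m / (p 1 * μ 1 + μ m)

/-- The constant `b_m`. -/
def coxB (M : ℕ) (μ p : ℕ → ℝ) (m : ℕ) : ℝ :=
  (1 - coxA μ p m) * (1 + ∑ r ∈ Finset.Icc (m + 1) M, coxV μ p r / coxV μ p 1)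
    - coxA μ p m * coxV μ p m / coxV μ p 1

/-- The constant `ξ = ∑_{m=2}^M b_m ∏_{j=m+1}^M a_j`. -/
def coxXi (M : ℕ) (μ p : ℕ → ℝ) : ℝ :=
  ∑ m ∈ Finset.Icc 2 M, coxB M μ p m * ∏ j ∈ Finset.Icc (m + 1) M, coxA μ p j

/-- The constant `c_m`. -/
def coxC (M : ℕ) (μ p : ℕ → ℝ) (m : ℕ) : ℝ :=
  5 * (1 - coxA μ p m) * (∑ r ∈ Finset.Icc (m + 1) M, ((r : ℝ) - 1) * coxV μ p r)
    + 5 * coxA μ p m * (∑ r ∈ Finset.Icc 2 (m - 1), μ r * coxV μ p r / μ m)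
    + 5 * ((m : ℝ) - 2) * coxA μ p m * coxV μ p m + 5 - coxA μ p m

/-- The constant `C_M = ∑_{m=2}^M c_m ∏_{j=m+1}^M a_j`. -/
def coxCM (M : ℕ) (μ p : ℕ → ℝ) : ℝ :=
  ∑ m ∈ Finset.Icc 2 M, coxC M μ p m * ∏ j ∈ Finset.Icc (m + 1) M, coxA μ p j

/-- The arrival rate `λ = 1 - N^{-α}`. -/
def lamOf (N : ℕ) (α : ℝ) : ℝ := 1 - (N : ℝ) ^ (-α)

/-- The matrix `e_{i,m}` with `(i,m)` entry `1/N` and all other entries `0`. -/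
def eMat (N i m : ℕ) : ℕ → ℕ → ℝ := fun i' m' => if i' = i ∧ m' = m then (N : ℝ)⁻¹ else 0

/-- State update upon an arrival routed to a server with `i-1` jobs, in-service job in phase `m`. -/
def arrUpd (N i m : ℕ) (s : ℕ → ℕ → ℝ) : ℕ → ℕ → ℝ := s + eMat N i m

/-- State update upon a departure from a server with `i` jobs, in-service job in phase `m`. -/
def depUpd (N i m : ℕ) (s : ℕ → ℕ → ℝ) : ℕ → ℕ → ℝ :=
  s - (∑ j ∈ Finset.Icc 1 i, eMat N j m) + (∑ j ∈ Finset.Icc 1 (i - 1), eMat N j 1)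

/-- State update upon a phase transition `m → m+1` at a server with `i` jobs. -/
def phaUpd (N i m : ℕ) (s : ℕ → ℕ → ℝ) : ℕ → ℕ → ℝ :=
  s - (∑ j ∈ Finset.Icc 1 i, eMat N j m) + (∑ j ∈ Finset.Icc 1 i, eMat N j (m + 1))

/-- The transition rate of the load-balancing CTMC from state `s` to state `s'`. -/
def lbRate (N b M : ℕ) (lam : ℝ) (μ p : ℕ → ℝ) (A : ℕ → ℕ → (ℕ → ℕ → ℝ) → ℝ)
    (s s' : ℕ → ℕ → ℝ) : ℝ :=
  ∑ i ∈ Finset.Icc 1 b, ∑ m ∈ Finset.Icc 1 M,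
    ((if s' = arrUpd N i m s then lam * N * (A (i - 1) m s - A i m s) else 0)
      + (if s' = depUpd N i m s then (1 - p m) * μ m * N * (s i m - s (i + 1) m) else 0)
      + (if s' = phaUpd N i m s then p m * μ m * N * (s i m - s (i + 1) m) else 0))

/-- States in the state space `𝒮^{(N)}`, in canonical form (zero outside the relevant indices). -/
def canonState (N b M : ℕ) (s : ℕ → ℕ → ℝ) : Prop :=
  (∀ m ∈ Finset.Icc 1 M, s 1 m ≤ 1) ∧
  (∀ m ∈ Finset.Icc 1 M, 0 ≤ s b m) ∧
  (∀ m ∈ Finset.Icc 1 M, ∀ i, 1 ≤ i → i < b → s (i + 1) m ≤ s i m) ∧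
  (∑ m ∈ Finset.Icc 1 M, s 1 m ≤ 1) ∧
  (∀ m ∈ Finset.Icc 1 M, ∀ i ∈ Finset.Icc 1 b, ∃ n : ℕ, s i m = (n : ℝ) / N) ∧
  (∀ i m : ℕ, i ∉ Finset.Icc 1 b ∨ m ∉ Finset.Icc 1 M → s i m = 0)

/-- A many-server load-balancing system with Coxian-`M` service times in the
sub-Halfin-Whitt regime, together with a load balancing policy `A`, its finite state
space `SS`, and the stationary distribution `pi` of the induced CTMC. -/
structure LBModel where
  N : ℕ
  M : ℕ
  b : ℕ
  α : ℝ
  μ : ℕ → ℝ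
  p : ℕ → ℝ
  A : ℕ → ℕ → (ℕ → ℕ → ℝ) → ℝ
  SS : Finset (ℕ → ℕ → ℝ)
  pi : (ℕ → ℕ → ℝ) → ℝ
  hN : 2 ≤ N
  hM : 1 ≤ M
  hb : 1 ≤ b
  hα0 : 0 < α
  hα1 : α < 1 / 2
  hμ : ∀ m ∈ Finset.Icc 1 M, 0 < μ m
  hp0 : ∀ m ∈ Finset.Icc 1 M, 0 ≤ p m
  hp1 : ∀ m ∈ Finset.Icc 1 (M - 1), p m < 1
  hpM : p M = 0
  hnorm : ∑ m ∈ Finset.Icc 1 M, coxV μ p m = 1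
  hSS : ∀ s, s ∈ SS ↔ canonState N b M s
  hA01 : ∀ s ∈ SS, ∀ i ∈ Finset.Icc 0 b, ∀ m ∈ Finset.Icc 1 M, 0 ≤ A i m s ∧ A i m s ≤ 1
  hAmono : ∀ s ∈ SS, ∀ m ∈ Finset.Icc 1 M, ∀ i < b, A (i + 1) m s ≤ A i m s
  hAsum : ∀ s ∈ SS, ∑ m ∈ Finset.Icc 1 M, A 0 m s = 1
  hAidle : ∀ s ∈ SS, ∀ m ∈ Finset.Icc 2 M, A 0 m s = A 1 m s
  hirr : ∀ s ∈ SS, ∀ s' ∈ SS,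
    Relation.ReflTransGen
      (fun x y => x ∈ SS ∧ y ∈ SS ∧ x ≠ y ∧ 0 < lbRate N b M (lamOf N α) μ p A x y) s s'
  hpi0 : ∀ s ∈ SS, 0 ≤ pi s
  hpi1 : ∑ s ∈ SS, pi s = 1
  hstat : ∀ s' ∈ SS,
    ∑ s ∈ SS.erase s', pi s * lbRate N b M (lamOf N α) μ p A s s'
      = pi s' * ∑ s'' ∈ SS.erase s', lbRate N b M (lamOf N α) μ p A s' s''
  hxi0 : 0 < coxXi M μ p
  hxi1 : coxXi M μ p < 1

namespace LBModel

variable (ℳ : LBModel)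

/-- The normalized arrival rate `λ = 1 - N^{-α}`. -/
def lam : ℝ := lamOf ℳ.N ℳ.α

/-- `Δ = (log N)/√N`. -/
def Del : ℝ := Real.log ℳ.N / Real.sqrt ℳ.N

/-- Steady-state probability of an event `E`. -/
def prob (E : (ℕ → ℕ → ℝ) → Prop) : ℝ := ∑ s ∈ ℳ.SS, if E s then ℳ.pi s else 0

/-- Steady-state expectation of a function `f` of the state. -/
def expect (f : (ℕ → ℕ → ℝ) → ℝ) : ℝ := ∑ s ∈ ℳ.SS, ℳ.pi s * f s

/-- `A_i(s) = ∑_m A_{i,m}(s)`: probability that an arrival is routed to a server with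
at least `i` jobs. -/
def Arow (i : ℕ) (s : ℕ → ℕ → ℝ) : ℝ := ∑ m ∈ Finset.Icc 1 ℳ.M, ℳ.A i m s

/-- The LB-zero (class `Π`) property. -/
def LBZero : Prop :=
  ∀ s ∈ ℳ.SS, (∑ m ∈ Finset.Icc 1 ℳ.M, s 1 m) ≤ 1 - 1 / ((ℳ.N : ℝ) ^ ℳ.α * Real.log ℳ.N) →
    ℳ.Arow 1 s ≤ 1 / Real.sqrt ℳ.N

/-- The zero-waiting equilibrium `s*_{1,m} = λ v_m`. -/
def sstar (m : ℕ) : ℝ := ℳ.lam * coxV ℳ.μ ℳ.p m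

/-- `ξ`. -/
def xi : ℝ := coxXi ℳ.M ℳ.μ ℳ.p

/-- `C_M`. -/
def CMc : ℝ := coxCM ℳ.M ℳ.μ ℳ.p

/-- `v̄ = min_m v_m`. -/
def vbar : ℝ := (Finset.Icc 1 ℳ.M).inf' (Finset.nonempty_Icc.mpr ℳ.hM) (coxV ℳ.μ ℳ.p)

/-- The constant `C`. -/
def Cc : ℝ :=
  Real.sqrt (2 * ℳ.vbar ^ 2 * Real.log (1 / ℳ.xi)
    / (3 * ℳ.M + (3 * ℳ.M + 4) * Real.log (1 / ℳ.xi)))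

/-- `θ_m = (6 μ_1 v_m + 5(m-1) v_m)/C`. -/
def θc (m : ℕ) : ℝ :=
  (6 * ℳ.μ 1 * coxV ℳ.μ ℳ.p m + 5 * ((m : ℝ) - 1) * coxV ℳ.μ ℳ.p m) / ℳ.Cc

/-- `w_m = (1 - p_m) μ_m`. -/
def wFun (m : ℕ) : ℝ := (1 - ℳ.p m) * ℳ.μ m

/-- `w_u = max_m w_m`. -/
def wu : ℝ := (Finset.Icc 1 ℳ.M).sup' (Finset.nonempty_Icc.mpr ℳ.hM) ℳ.wFun

/-- `w_l = min_m w_m`. -/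
def wl : ℝ := (Finset.Icc 1 ℳ.M).inf' (Finset.nonempty_Icc.mpr ℳ.hM) ℳ.wFun

/-- `μ_max = max_m μ_m`. -/
def μmax : ℝ := (Finset.Icc 1 ℳ.M).sup' (Finset.nonempty_Icc.mpr ℳ.hM) ℳ.μ

/-- The constant `ζ`. -/
def ζc : ℝ :=
  4 * ℳ.wu * ℳ.b / ℳ.wl *
    ((1 / ℳ.wl - 1 / ℳ.wu) * (∑ m ∈ Finset.Icc 1 ℳ.M, ℳ.θc m * ℳ.wFun m) + 1 / ℳ.wl + 6)

/-- The constant `k`. -/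
def kc : ℝ :=
  (∑ m ∈ Finset.Icc 1 ℳ.M, ℳ.θc m * ℳ.wFun m) / ℳ.wu
    + (1 + ℳ.wl / (4 * ℳ.wu * ℳ.b)) * ℳ.ζc - ∑ m ∈ Finset.Icc 1 ℳ.M, ℳ.θc m

end LBModel




lemma aux_tele1 (b : ℕ) (F : ℕ → ℝ) :
    ∑ i ∈ Finset.Icc 1 b, (F (i - 1) - F i) = F 0 - F b := by
  induction b with
  | zero => simp
  | succ b ih =>
    rw [Finset.sum_Icc_succ_top (by omega : 1 ≤ b + 1), ih]
    simp

lemma aux_tele2 (b : ℕ) (F : ℕ → ℝ) :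
    ∑ i ∈ Finset.Icc 1 b, (F i - F (i + 1)) = F 1 - F (b + 1) := by
  induction b with
  | zero => simp
  | succ b ih =>
    rw [Finset.sum_Icc_succ_top (by omega : 1 ≤ b + 1), ih]
    ring

lemma aux_taylor (η Δ u v : ℝ) (hΔ : 0 < Δ) :
    (-(max (u - η) 0) / Δ) * (v - u) - (v - u)^2 / (2*Δ)
      ≤ -(max (v - η) 0)^2 / (2*Δ) - (-(max (u - η) 0)^2 / (2*Δ)) := by
  set a := max (u - η) 0 with ha
  set c := max (v - η) 0 with hc
  have ha0 : 0 ≤ a := le_max_right _ _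
  have ha1 : u - η ≤ a := le_max_left _ _
  have hc0 : 0 ≤ c := le_max_right _ _
  have key : c^2 ≤ (a + (v - u))^2 := by
    rcases max_cases (v - η) (0:ℝ) with ⟨h1, h2⟩ | ⟨h1, h2⟩
    · have hcv : c ≤ a + (v - u) := by rw [hc, h1]; linarith
      exact pow_le_pow_left₀ hc0 hcv 2
    · rw [hc, h1]
      nlinarith [sq_nonneg (a + (v - u))]
  have h2Δ : (0:ℝ) < 2*Δ := by linarith
  have hΔ0 : Δ ≠ 0 := ne_of_gt hΔ
  have hid : (-c^2 / (2*Δ) - (-a^2 / (2*Δ))) - ((-a / Δ) * (v - u) - (v - u)^2 / (2*Δ))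
      = ((a + (v-u))^2 - c^2) / (2*Δ) := by
    field_simp
    ring
  have hnn : 0 ≤ ((a + (v-u))^2 - c^2) / (2*Δ) :=
    div_nonneg (by linarith) (le_of_lt h2Δ)
  linarith

lemma aux_anti (η Δ : ℝ) (hΔ : 0 < Δ) {u v : ℝ} (huv : u ≤ v) :
    -(max (v - η) 0)^2 / (2*Δ) ≤ -(max (u - η) 0)^2 / (2*Δ) := by
  have h2Δ : (0:ℝ) < 2*Δ := by linarith
  have hac : max (u - η) 0 ≤ max (v - η) 0 := max_le_max (by linarith) le_rfl
  have := pow_le_pow_left₀ (le_max_right (u - η) 0) hac 2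
  have h3 := neg_le_neg ((div_le_div_iff_of_pos_right h2Δ).mpr this)
  rw [neg_div, neg_div]
  exact h3

lemma aux_sum_eMat_apply (N : ℕ) (A : Finset ℕ) (mm j m' : ℕ) :
    (∑ j' ∈ A, eMat N j' mm) j m' = if j ∈ A ∧ m' = mm then (N : ℝ)⁻¹ else 0 := by
  rw [Finset.sum_apply, Finset.sum_apply]
  simp only [eMat]
  by_cases hm : m' = mm
  · subst hm
    simp only [and_true]
    rw [Finset.sum_ite_eq A j (fun _ => (N:ℝ)⁻¹)]
  · simp [hm]

lemma aux_sum_grid (b M k mm : ℕ) (c : ℝ) (hk : k ≤ b) (hm : mm ∈ Finset.Icc 1 M) :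
    ∑ j ∈ Finset.Icc 1 b, ∑ m' ∈ Finset.Icc 1 M,
      (if j ∈ Finset.Icc 1 k ∧ m' = mm then c else 0) = k * c := by
  have hinner : ∀ j, ∑ m' ∈ Finset.Icc 1 M, (if j ∈ Finset.Icc 1 k ∧ m' = mm then c else 0)
      = if j ∈ Finset.Icc 1 k then c else 0 := by
    intro j
    by_cases hj : j ∈ Finset.Icc 1 k
    · simp only [hj, true_and]
      rw [Finset.sum_ite_eq' (Finset.Icc 1 M) mm (fun _ => c), if_pos hm]
      simp
    · simp [hj]
  rw [Finset.sum_congr rfl fun j _ => hinner j, Finset.sum_ite_mem]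
  have hint : Finset.Icc 1 b ∩ Finset.Icc 1 k = Finset.Icc 1 k := by
    apply Finset.inter_eq_right.mpr
    intro x hx
    simp only [Finset.mem_Icc] at *
    omega
  rw [hint, Finset.sum_const, Nat.card_Icc]
  simp [Nat.add_sub_cancel, nsmul_eq_mul]

lemma aux_sum_point (b M i mm : ℕ) (c : ℝ) (hi : i ∈ Finset.Icc 1 b) (hm : mm ∈ Finset.Icc 1 M) :
    ∑ j ∈ Finset.Icc 1 b, ∑ m' ∈ Finset.Icc 1 M,
      (if j = i ∧ m' = mm then c else 0) = c := by
  have hinner : ∀ j, ∑ m' ∈ Finset.Icc 1 M, (if j = i ∧ m' = mm then c else 0)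
      = if j = i then c else 0 := by
    intro j
    by_cases hj : j = i
    · simp only [hj, true_and]
      rw [Finset.sum_ite_eq' (Finset.Icc 1 M) mm (fun _ => c), if_pos hm]
      simp
    · simp [hj]
  rw [Finset.sum_congr rfl fun j _ => hinner j, Finset.sum_ite_eq' (Finset.Icc 1 b) i (fun _ => c),
    if_pos hi]

namespace LBModel
variable (ℳ : LBModel)

/-- Total (scaled) number of jobs. -/
noncomputable def Xtot (s : ℕ → ℕ → ℝ) : ℝ :=
  ∑ i ∈ Finset.Icc 1 ℳ.b, ∑ m ∈ Finset.Icc 1 ℳ.M, s i m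

/-- Total departure rate coefficient `D₁`. -/
noncomputable def D1 (s : ℕ → ℕ → ℝ) : ℝ :=
  ∑ m ∈ Finset.Icc 1 ℳ.M, (1 - ℳ.p m) * ℳ.μ m * s 1 m

lemma NposR : (0:ℝ) < (ℳ.N : ℝ) := by
  have := ℳ.hN; positivity

lemma None : (1:ℝ) < (ℳ.N : ℝ) := by
  have := ℳ.hN; exact_mod_cast (by omega : 1 < ℳ.N)

lemma sqrtN_pos : 0 < Real.sqrt ℳ.N := Real.sqrt_pos.mpr ℳ.NposR

lemma logN_pos : 0 < Real.log ℳ.N := Real.log_pos ℳ.None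

lemma Del_pos : 0 < ℳ.Del := div_pos ℳ.logN_pos ℳ.sqrtN_pos

lemma Del_le_two : ℳ.Del ≤ 2 := by
  rw [Del, div_le_iff₀ ℳ.sqrtN_pos]
  have h1 : Real.log (Real.sqrt ℳ.N) ≤ Real.sqrt ℳ.N - 1 :=
    Real.log_le_sub_one_of_pos ℳ.sqrtN_pos
  have h2 : Real.log (Real.sqrt ℳ.N) = Real.log ℳ.N / 2 :=
    Real.log_sqrt (le_of_lt ℳ.NposR)
  linarith

lemma lam_nonneg : 0 ≤ ℳ.lam := by
  have : ((ℳ.N:ℝ)) ^ (-ℳ.α) ≤ 1 :=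
    Real.rpow_le_one_of_one_le_of_nonpos (le_of_lt ℳ.None) (neg_nonpos.mpr (le_of_lt ℳ.hα0))
  simp only [lam, lamOf]
  linarith

lemma lam_le_one : ℳ.lam ≤ 1 := by
  have h := Real.rpow_nonneg (le_of_lt ℳ.NposR) (-ℳ.α)
  simp only [lam, lamOf]
  linarith

lemma coxV_nonneg (m : ℕ) (hm : m ∈ Finset.Icc 1 ℳ.M) : 0 ≤ coxV ℳ.μ ℳ.p m := by
  rw [Finset.mem_Icc] at hm
  apply div_nonneg
  · apply Finset.prod_nonneg
    intro i hi
    rw [Finset.mem_Icc] at hi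
    exact ℳ.hp0 i (Finset.mem_Icc.mpr ⟨hi.1, by omega⟩)
  · exact le_of_lt (ℳ.hμ m (Finset.mem_Icc.mpr hm))

lemma mu1_ge_one : 1 ≤ ℳ.μ 1 := by
  have h1M : (1:ℕ) ∈ Finset.Icc 1 ℳ.M := Finset.mem_Icc.mpr ⟨le_refl 1, ℳ.hM⟩
  have hv1 : coxV ℳ.μ ℳ.p 1 = 1 / ℳ.μ 1 := by
    simp [coxV]
  have hle : coxV ℳ.μ ℳ.p 1 ≤ 1 := by
    rw [← ℳ.hnorm]
    exact Finset.single_le_sum (fun m hm => ℳ.coxV_nonneg m hm) h1M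
  have hμ1 : 0 < ℳ.μ 1 := ℳ.hμ 1 h1M
  rw [hv1, div_le_one hμ1] at hle
  exact hle

lemma mumax_ge_one : 1 ≤ ℳ.μmax := by
  have h1M : (1:ℕ) ∈ Finset.Icc 1 ℳ.M := Finset.mem_Icc.mpr ⟨le_refl 1, ℳ.hM⟩
  exact le_trans ℳ.mu1_ge_one (Finset.le_sup' ℳ.μ h1M)

lemma p_le_one (m : ℕ) (hm : m ∈ Finset.Icc 1 ℳ.M) : ℳ.p m ≤ 1 := by
  rw [Finset.mem_Icc] at hm
  rcases eq_or_lt_of_le hm.2 with h | h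
  · rw [h, ℳ.hpM]; norm_num
  · exact le_of_lt (ℳ.hp1 m (Finset.mem_Icc.mpr ⟨hm.1, by omega⟩))

end LBModel

namespace LBModel
variable (ℳ : LBModel)

lemma canon_of_mem {s} (hs : s ∈ ℳ.SS) : canonState ℳ.N ℳ.b ℳ.M s := (ℳ.hSS s).mp hs

lemma s_anti {s} (hs : s ∈ ℳ.SS) {m : ℕ} (hm : m ∈ Finset.Icc 1 ℳ.M) :
    ∀ i j, 1 ≤ i → i ≤ j → j ≤ ℳ.b → s j m ≤ s i m := by
  obtain ⟨h1, h2, h3, h4, h5, h6⟩ := ℳ.canon_of_mem hs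
  intro i j hi hij hjb
  induction j with
  | zero => omega
  | succ j ih =>
    rcases eq_or_lt_of_le hij with h | h
    · rw [h]
    · have hstep := h3 m hm j (by omega) (by omega)
      exact le_trans hstep (ih (by omega) (by omega))

lemma s_top {s} (hs : s ∈ ℳ.SS) (m : ℕ) : s (ℳ.b + 1) m = 0 := by
  obtain ⟨-,-,-,-,-,h6⟩ := ℳ.canon_of_mem hs
  exact h6 _ m (Or.inl (by simp [Finset.mem_Icc]))

lemma s_nonneg {s} (hs : s ∈ ℳ.SS) {m} (hm : m ∈ Finset.Icc 1 ℳ.M)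
    {i} (hi : 1 ≤ i) (hib : i ≤ ℳ.b) : 0 ≤ s i m := by
  have h2 := (ℳ.canon_of_mem hs).2.1
  exact le_trans (h2 m hm) (ℳ.s_anti hs hm i ℳ.b hi hib le_rfl)

lemma q_nonneg {s} (hs : s ∈ ℳ.SS) {m} (hm : m ∈ Finset.Icc 1 ℳ.M)
    {i} (hi : 1 ≤ i) (hib : i ≤ ℳ.b) : 0 ≤ s i m - s (i + 1) m := by
  rcases eq_or_lt_of_le hib with h | h
  · subst h
    rw [ℳ.s_top hs m]
    simpa using ℳ.s_nonneg hs hm hi le_rfl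
  · have h3 := (ℳ.canon_of_mem hs).2.2.1
    have := h3 m hm i hi h
    linarith

lemma s_int {s} (hs : s ∈ ℳ.SS) {m} (hm : m ∈ Finset.Icc 1 ℳ.M)
    {i} (hi : 1 ≤ i) (hib : i ≤ ℳ.b) : ∃ n : ℕ, s i m = (n : ℝ) / ℳ.N :=
  (ℳ.canon_of_mem hs).2.2.2.2.1 m hm i (Finset.mem_Icc.mpr ⟨hi, hib⟩)

lemma q_int {s} (hs : s ∈ ℳ.SS) {m} (hm : m ∈ Finset.Icc 1 ℳ.M)
    {i} (hi : 1 ≤ i) (hib : i ≤ ℳ.b) (hne : s i m - s (i + 1) m ≠ 0) :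
    (ℳ.N:ℝ)⁻¹ ≤ s i m - s (i + 1) m := by
  obtain ⟨n, hn⟩ := ℳ.s_int hs hm hi hib
  have hnext : ∃ n' : ℕ, s (i + 1) m = (n' : ℝ) / ℳ.N := by
    rcases eq_or_lt_of_le hib with h | h
    · exact ⟨0, by subst h; simp [ℳ.s_top hs m]⟩
    · exact ℳ.s_int hs hm (by omega) (by omega)
  obtain ⟨n', hn'⟩ := hnext
  have hq0 := ℳ.q_nonneg hs hm hi hib
  have hpos : 0 < s i m - s (i + 1) m := lt_of_le_of_ne hq0 (Ne.symm hne)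
  have hlt : (n' : ℝ) < n := by
    rw [hn, hn'] at hpos
    rw [div_sub_div_same, div_pos_iff] at hpos
    rcases hpos with ⟨h1, _⟩ | ⟨_, h2⟩
    · linarith
    · exact absurd ℳ.NposR (by linarith)
  have hcast : (n' : ℕ) < n := by exact_mod_cast hlt
  have hc : (n' : ℝ) + 1 ≤ n := by exact_mod_cast hcast
  rw [hn, hn', div_sub_div_same, inv_eq_one_div]
  exact (div_le_div_iff_of_pos_right ℳ.NposR).mpr (by linarith)

lemma row_le_one {s} (hs : s ∈ ℳ.SS) : ∑ m ∈ Finset.Icc 1 ℳ.M, s 1 m ≤ 1 :=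
  (ℳ.canon_of_mem hs).2.2.2.1

lemma D1_nonneg {s} (hs : s ∈ ℳ.SS) : 0 ≤ ℳ.D1 s := by
  apply Finset.sum_nonneg
  intro m hm
  have h1 := ℳ.p_le_one m hm
  have h2 := ℳ.hμ m hm
  have h3 := ℳ.s_nonneg hs hm (le_refl 1) ℳ.hb
  have : 0 ≤ 1 - ℳ.p m := by linarith
  positivity

lemma D1_le_mumax {s} (hs : s ∈ ℳ.SS) : ℳ.D1 s ≤ ℳ.μmax := by
  have hstep : ℳ.D1 s ≤ ∑ m ∈ Finset.Icc 1 ℳ.M, ℳ.μmax * s 1 m := by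
    apply Finset.sum_le_sum
    intro m hm
    have h0 := ℳ.hp0 m hm
    have h2 := ℳ.hμ m hm
    have h3 := ℳ.s_nonneg hs hm (le_refl 1) ℳ.hb
    have h4 : ℳ.μ m ≤ ℳ.μmax := Finset.le_sup' ℳ.μ hm
    have h6 : (1 - ℳ.p m) * ℳ.μ m ≤ ℳ.μmax := by nlinarith [mul_nonneg h0 h2.le]
    exact mul_le_mul_of_nonneg_right h6 h3
  rw [← Finset.mul_sum] at hstep
  have hmx : 0 ≤ ℳ.μmax := le_trans zero_le_one ℳ.mumax_ge_one
  nlinarith [ℳ.row_le_one hs, hstep]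

lemma A_nonneg {s} (hs : s ∈ ℳ.SS) {i} (hib : i ≤ ℳ.b) {m} (hm : m ∈ Finset.Icc 1 ℳ.M) :
    0 ≤ ℳ.A i m s := (ℳ.hA01 s hs i (Finset.mem_Icc.mpr ⟨Nat.zero_le _, hib⟩) m hm).1

lemma A_le_A0 {s} (hs : s ∈ ℳ.SS) {m} (hm : m ∈ Finset.Icc 1 ℳ.M) :
    ∀ i, i ≤ ℳ.b → ℳ.A i m s ≤ ℳ.A 0 m s := by
  intro i
  induction i with
  | zero => intro _; exact le_rfl
  | succ i ih =>
    intro hib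
    exact le_trans (ℳ.hAmono s hs m hm i (by omega)) (ih (by omega))

lemma Arow_nonneg {s} (hs : s ∈ ℳ.SS) : 0 ≤ ℳ.Arow ℳ.b s :=
  Finset.sum_nonneg fun m hm => ℳ.A_nonneg hs le_rfl hm

lemma Arow_le_one {s} (hs : s ∈ ℳ.SS) : ℳ.Arow ℳ.b s ≤ 1 := by
  rw [Arow, ← ℳ.hAsum s hs]
  exact Finset.sum_le_sum fun m hm => ℳ.A_le_A0 hs hm ℳ.b le_rfl

lemma r_nonneg {s} (hs : s ∈ ℳ.SS) {m} (hm : m ∈ Finset.Icc 1 ℳ.M)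
    {i} (hi : 1 ≤ i) (hib : i ≤ ℳ.b) : 0 ≤ ℳ.A (i - 1) m s - ℳ.A i m s := by
  have := ℳ.hAmono s hs m hm (i - 1) (by omega)
  rw [show i - 1 + 1 = i from by omega] at this
  linarith

end LBModel

lemma arrUpd_apply (N i m : ℕ) (s : ℕ → ℕ → ℝ) (j m' : ℕ) :
    arrUpd N i m s j m' = s j m' + (if j = i ∧ m' = m then (N:ℝ)⁻¹ else 0) := by
  simp [arrUpd, eMat, Pi.add_apply]

lemma depUpd_apply (N i m : ℕ) (s : ℕ → ℕ → ℝ) (j m' : ℕ) :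
    depUpd N i m s j m' = s j m'
      - (if j ∈ Finset.Icc 1 i ∧ m' = m then (N:ℝ)⁻¹ else 0)
      + (if j ∈ Finset.Icc 1 (i-1) ∧ m' = 1 then (N:ℝ)⁻¹ else 0) := by
  simp only [depUpd, Pi.add_apply, Pi.sub_apply, aux_sum_eMat_apply]

lemma phaUpd_apply (N i m : ℕ) (s : ℕ → ℕ → ℝ) (j m' : ℕ) :
    phaUpd N i m s j m' = s j m'
      - (if j ∈ Finset.Icc 1 i ∧ m' = m then (N:ℝ)⁻¹ else 0)
      + (if j ∈ Finset.Icc 1 i ∧ m' = m + 1 then (N:ℝ)⁻¹ else 0) := by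
  simp only [phaUpd, Pi.add_apply, Pi.sub_apply, aux_sum_eMat_apply]

namespace LBModel
variable (ℳ : LBModel)

lemma Xtot_arr {i m : ℕ} (hi : i ∈ Finset.Icc 1 ℳ.b) (hm : m ∈ Finset.Icc 1 ℳ.M)
    (s : ℕ → ℕ → ℝ) : ℳ.Xtot (arrUpd ℳ.N i m s) = ℳ.Xtot s + (ℳ.N:ℝ)⁻¹ := by
  simp only [Xtot, arrUpd_apply, Finset.sum_add_distrib]
  rw [aux_sum_point ℳ.b ℳ.M i m _ hi hm]

lemma Xtot_dep {i m : ℕ} (hi : i ∈ Finset.Icc 1 ℳ.b) (hm : m ∈ Finset.Icc 1 ℳ.M)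
    (s : ℕ → ℕ → ℝ) : ℳ.Xtot (depUpd ℳ.N i m s) = ℳ.Xtot s - (ℳ.N:ℝ)⁻¹ := by
  rw [Finset.mem_Icc] at hi
  simp only [Xtot, depUpd_apply, Finset.sum_add_distrib, Finset.sum_sub_distrib]
  rw [aux_sum_grid ℳ.b ℳ.M i m _ hi.2 hm,
    aux_sum_grid ℳ.b ℳ.M (i-1) 1 _ (by omega) (Finset.mem_Icc.mpr ⟨le_rfl, ℳ.hM⟩)]
  have hc : ((i - 1 : ℕ) : ℝ) = (i : ℝ) - 1 := by
    have := hi.1; push_cast [Nat.cast_sub this]; ring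
  rw [hc]
  ring

lemma Xtot_pha {i m : ℕ} (hi : i ∈ Finset.Icc 1 ℳ.b) (hm1 : 1 ≤ m) (hmM : m < ℳ.M)
    (s : ℕ → ℕ → ℝ) : ℳ.Xtot (phaUpd ℳ.N i m s) = ℳ.Xtot s := by
  rw [Finset.mem_Icc] at hi
  simp only [Xtot, phaUpd_apply, Finset.sum_add_distrib, Finset.sum_sub_distrib]
  rw [aux_sum_grid ℳ.b ℳ.M i m _ hi.2 (Finset.mem_Icc.mpr ⟨hm1, by omega⟩),
    aux_sum_grid ℳ.b ℳ.M i (m+1) _ hi.2 (Finset.mem_Icc.mpr ⟨by omega, by omega⟩)]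
  ring

lemma dep_mem {s} (hs : s ∈ ℳ.SS) {i m : ℕ} (hi : 1 ≤ i) (hib : i ≤ ℳ.b)
    (hm1 : 1 ≤ m) (hmM : m ≤ ℳ.M) (hne : s i m - s (i + 1) m ≠ 0) :
    depUpd ℳ.N i m s ∈ ℳ.SS := by
  have hm : m ∈ Finset.Icc 1 ℳ.M := Finset.mem_Icc.mpr ⟨hm1, hmM⟩
  have hδ : (0:ℝ) < (ℳ.N:ℝ)⁻¹ := by
    have := ℳ.NposR; positivity
  have hq := ℳ.q_int hs hm hi hib hne
  have hsip : 0 ≤ s (i + 1) m := by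
    rcases eq_or_lt_of_le hib with h | h
    · rw [h, ℳ.s_top hs m]
    · exact ℳ.s_nonneg hs hm (by omega) (by omega)
  have him : (ℳ.N:ℝ)⁻¹ ≤ s i m := by linarith
  have h1m : (ℳ.N:ℝ)⁻¹ ≤ s 1 m :=
    le_trans him (ℳ.s_anti hs hm 1 i (le_rfl) hi hib)
  obtain ⟨h1, h2, h3, h4, h5, h6⟩ := ℳ.canon_of_mem hs
  rw [ℳ.hSS]
  have hM1 : (1:ℕ) ∈ Finset.Icc 1 ℳ.M := Finset.mem_Icc.mpr ⟨le_rfl, ℳ.hM⟩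
  have hpair : m ≠ 1 → s 1 1 + (ℳ.N:ℝ)⁻¹ ≤ 1 := by
    intro hm1'
    have hsub : ({1, m} : Finset ℕ) ⊆ Finset.Icc 1 ℳ.M := by
      intro x hx
      simp only [Finset.mem_insert, Finset.mem_singleton] at hx
      rcases hx with rfl | rfl
      · exact hM1
      · exact hm
    have hps : ∑ x ∈ ({1, m} : Finset ℕ), s 1 x = s 1 1 + s 1 m :=
      Finset.sum_pair (fun h => hm1' h.symm)
    have hle : ∑ x ∈ ({1, m} : Finset ℕ), s 1 x ≤ ∑ m' ∈ Finset.Icc 1 ℳ.M, s 1 m' :=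
      Finset.sum_le_sum_of_subset_of_nonneg hsub
        (fun m' hm' _ => ℳ.s_nonneg hs hm' le_rfl ℳ.hb)
    have := ℳ.row_le_one hs
    rw [hps] at hle
    linarith
  refine ⟨?_, ?_, ?_, ?_, ?_, ?_⟩
  · -- each entry of first row ≤ 1
    intro m' hm'
    have hr := h1 m' hm'
    simp only [depUpd_apply, Finset.mem_Icc]
    split_ifs with c1 c2 c2
    · linarith
    · linarith
    · -- c1 false, c2 true : m' = 1, i ≥ 2, and m ≠ 1
      have hmne : m ≠ 1 := by
        intro hmeq
        exact c1 ⟨⟨le_rfl, hi⟩, by omega⟩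
      have := hpair hmne
      have hm'1 : m' = 1 := c2.2
      rw [hm'1]
      linarith
    · linarith
  · -- last row nonneg
    intro m' hm'
    simp only [depUpd_apply, Finset.mem_Icc]
    split_ifs with c1 c2 c2
    · omega
    · -- c1 : b ≤ i hence i = b, and m' = m
      have hieq : i = ℳ.b := by omega
      have hmeq : m' = m := c1.2
      subst hieq
      rw [hmeq, ℳ.s_top hs m] at *
      rw [hmeq]
      linarith
    · omega
    · linarith [h2 m' hm']
  · -- monotone in i
    intro m' hm' j hj1 hjb
    have hmono' : s (j + 1) m' ≤ s j m' := h3 m' hm' j hj1 hjb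
    simp only [depUpd_apply, Finset.mem_Icc]
    by_cases hmm : m' = m
    · subst hmm
      by_cases hji : j = i
      · subst hji
        split_ifs <;> first | omega | linarith
      · split_ifs <;> first | omega | linarith
    · simp only [hmm, and_false, if_false]
      split_ifs <;> first | omega | linarith
  · -- row sum ≤ 1
    simp only [depUpd_apply, Finset.sum_add_distrib, Finset.sum_sub_distrib]
    have e1 : ∑ m' ∈ Finset.Icc 1 ℳ.M,
        (if (1:ℕ) ∈ Finset.Icc 1 i ∧ m' = m then (ℳ.N:ℝ)⁻¹ else 0) = (ℳ.N:ℝ)⁻¹ := by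
      have h1i : (1:ℕ) ∈ Finset.Icc 1 i := Finset.mem_Icc.mpr ⟨le_rfl, hi⟩
      simp only [h1i, true_and]
      rw [Finset.sum_ite_eq' (Finset.Icc 1 ℳ.M) m (fun _ => (ℳ.N:ℝ)⁻¹), if_pos hm]
    have e2 : ∑ m' ∈ Finset.Icc 1 ℳ.M,
        (if (1:ℕ) ∈ Finset.Icc 1 (i-1) ∧ m' = 1 then (ℳ.N:ℝ)⁻¹ else 0) ≤ (ℳ.N:ℝ)⁻¹ := by
      by_cases h1i : (1:ℕ) ∈ Finset.Icc 1 (i-1)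
      · simp only [h1i, true_and]
        rw [Finset.sum_ite_eq' (Finset.Icc 1 ℳ.M) 1 (fun _ => (ℳ.N:ℝ)⁻¹), if_pos hM1]
      · simp only [h1i, false_and, if_false, Finset.sum_const_zero]
        linarith
    rw [e1]
    linarith [h4, e2]
  · -- integrality
    intro m' hm' i' hi'
    obtain ⟨n, hn⟩ := h5 m' hm' i' hi'
    rw [Finset.mem_Icc] at hi'
    simp only [depUpd_apply]
    by_cases c1 : i' ∈ Finset.Icc 1 i ∧ m' = m
    · by_cases c2 : i' ∈ Finset.Icc 1 (i-1) ∧ m' = 1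
      · exact ⟨n, by rw [if_pos c1, if_pos c2, hn]; ring⟩
      · -- subtract one
        rw [Finset.mem_Icc] at c1
        have hge : (ℳ.N:ℝ)⁻¹ ≤ s i' m' := by
          rw [c1.2]
          exact le_trans him (ℳ.s_anti hs hm i' i c1.1.1 c1.1.2 hib)
        have hn1 : 1 ≤ n := by
          by_contra hn0
          have : n = 0 := by omega
          rw [this] at hn
          simp at hn
          rw [hn] at hge
          linarith
        refine ⟨n - 1, ?_⟩
        rw [if_pos (by rw [Finset.mem_Icc]; exact c1), if_neg c2, hn]
        push_cast [Nat.cast_sub hn1]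
        rw [inv_eq_one_div]
        ring
    · by_cases c2 : i' ∈ Finset.Icc 1 (i-1) ∧ m' = 1
      · refine ⟨n + 1, ?_⟩
        rw [if_neg c1, if_pos c2, hn]
        push_cast
        rw [inv_eq_one_div]
        ring
      · exact ⟨n, by rw [if_neg c1, if_neg c2, hn]; ring⟩
  · -- zero outside
    intro i' m' h
    have h0 : s i' m' = 0 := h6 i' m' h
    simp only [depUpd_apply, h0]
    rcases h with h | h
    · rw [if_neg, if_neg]
      · ring
      · rintro ⟨hmem, -⟩
        rw [Finset.mem_Icc] at *
        exact h (by omega)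
      · rintro ⟨hmem, -⟩
        rw [Finset.mem_Icc] at *
        exact h (by omega)
    · rw [if_neg, if_neg]
      · ring
      · rintro ⟨-, rfl⟩
        exact h hM1
      · rintro ⟨-, rfl⟩
        exact h hm

end LBModel

namespace LBModel
variable (ℳ : LBModel)

/-- Transition rates of the CTMC. -/
noncomputable def Q (s s' : ℕ → ℕ → ℝ) : ℝ :=
  lbRate ℳ.N ℳ.b ℳ.M (lamOf ℳ.N ℳ.α) ℳ.μ ℳ.p ℳ.A s s'

lemma stat_full {s'} (hs' : s' ∈ ℳ.SS) :
    ∑ s ∈ ℳ.SS, ℳ.pi s * ℳ.Q s s' = ℳ.pi s' * ∑ s'' ∈ ℳ.SS, ℳ.Q s' s'' := by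
  have h := ℳ.hstat s' hs'
  have e1 := (Finset.sum_erase_add ℳ.SS (fun s => ℳ.pi s * ℳ.Q s s') hs').symm
  have e2 := (Finset.sum_erase_add ℳ.SS (fun s'' => ℳ.Q s' s'') hs').symm
  rw [e1, e2]
  simp only [Q]
  rw [h]
  ring

lemma gen_zero (f : (ℕ → ℕ → ℝ) → ℝ) :
    ∑ s ∈ ℳ.SS, ℳ.pi s * (∑ s' ∈ ℳ.SS, ℳ.Q s s' * (f s' - f s)) = 0 := by
  have key : ∀ s ∈ ℳ.SS, ℳ.pi s * (∑ s' ∈ ℳ.SS, ℳ.Q s s' * (f s' - f s))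
      = (∑ s' ∈ ℳ.SS, ℳ.pi s * ℳ.Q s s' * f s')
        - (∑ s' ∈ ℳ.SS, ℳ.pi s * ℳ.Q s s') * f s := by
    intro s _
    rw [Finset.mul_sum, Finset.sum_mul, ← Finset.sum_sub_distrib]
    apply Finset.sum_congr rfl
    intros; ring
  rw [Finset.sum_congr rfl key, Finset.sum_sub_distrib, Finset.sum_comm]
  have e1 : ∀ s' ∈ ℳ.SS, ∑ s ∈ ℳ.SS, ℳ.pi s * ℳ.Q s s' * f s'
      = (ℳ.pi s' * ∑ s'' ∈ ℳ.SS, ℳ.Q s' s'') * f s' := by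
    intro s' hs'
    rw [← Finset.sum_mul, ℳ.stat_full hs']
  rw [Finset.sum_congr rfl e1]
  have e2 : ∀ s ∈ ℳ.SS, (∑ s' ∈ ℳ.SS, ℳ.pi s * ℳ.Q s s') * f s
      = (ℳ.pi s * ∑ s' ∈ ℳ.SS, ℳ.Q s s') * f s := by
    intro s _
    rw [Finset.mul_sum]
  rw [Finset.sum_congr rfl e2, sub_eq_zero]

end LBModel

namespace LBModel
variable (ℳ : LBModel)

/-- `η = λ + k Δ`. -/
noncomputable def etaC : ℝ := ℳ.lam + ℳ.kc * ℳ.Del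

/-- The Stein test function `g`. -/
noncomputable def gC (y : ℝ) : ℝ := -(max (y - ℳ.etaC) 0)^2 / (2 * ℳ.Del)

/-- Its derivative `g'`. -/
noncomputable def gpC (y : ℝ) : ℝ := -(max (y - ℳ.etaC) 0) / ℳ.Del

lemma gC_taylor (u v : ℝ) :
    ℳ.gpC u * (v - u) - (v - u)^2 / (2 * ℳ.Del) ≤ ℳ.gC v - ℳ.gC u :=
  aux_taylor ℳ.etaC ℳ.Del u v ℳ.Del_pos

lemma gC_anti {u v : ℝ} (huv : u ≤ v) : ℳ.gC v ≤ ℳ.gC u :=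
  aux_anti ℳ.etaC ℳ.Del ℳ.Del_pos huv

lemma per_state {s} (hs : s ∈ ℳ.SS) :
    ℳ.lam * ℳ.N * (1 - ℳ.Arow ℳ.b s) * (ℳ.gC (ℳ.Xtot s + (ℳ.N:ℝ)⁻¹) - ℳ.gC (ℳ.Xtot s))
      + ℳ.N * ℳ.D1 s * (ℳ.gC (ℳ.Xtot s - (ℳ.N:ℝ)⁻¹) - ℳ.gC (ℳ.Xtot s))
    ≤ ∑ s' ∈ ℳ.SS, ℳ.Q s s' * (ℳ.gC (ℳ.Xtot s') - ℳ.gC (ℳ.Xtot s)) := by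
  have hδ : (0:ℝ) < (ℳ.N:ℝ)⁻¹ := by have := ℳ.NposR; positivity
  set cp : ℝ := ℳ.gC (ℳ.Xtot s + (ℳ.N:ℝ)⁻¹) - ℳ.gC (ℳ.Xtot s) with hcp
  set cm : ℝ := ℳ.gC (ℳ.Xtot s - (ℳ.N:ℝ)⁻¹) - ℳ.gC (ℳ.Xtot s) with hcm
  have hcp0 : cp ≤ 0 := by
    rw [hcp]
    have := ℳ.gC_anti (by linarith : ℳ.Xtot s ≤ ℳ.Xtot s + (ℳ.N:ℝ)⁻¹)
    linarith
  have expand : ∀ s', ℳ.Q s s' * (ℳ.gC (ℳ.Xtot s') - ℳ.gC (ℳ.Xtot s))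
      = ∑ i ∈ Finset.Icc 1 ℳ.b, ∑ m ∈ Finset.Icc 1 ℳ.M,
          ((if s' = arrUpd ℳ.N i m s
              then lamOf ℳ.N ℳ.α * ℳ.N * (ℳ.A (i-1) m s - ℳ.A i m s)
                * (ℳ.gC (ℳ.Xtot s') - ℳ.gC (ℳ.Xtot s)) else 0)
            + (if s' = depUpd ℳ.N i m s
              then (1 - ℳ.p m) * ℳ.μ m * ℳ.N * (s i m - s (i+1) m)
                * (ℳ.gC (ℳ.Xtot s') - ℳ.gC (ℳ.Xtot s)) else 0)
            + (if s' = phaUpd ℳ.N i m s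
              then ℳ.p m * ℳ.μ m * ℳ.N * (s i m - s (i+1) m)
                * (ℳ.gC (ℳ.Xtot s') - ℳ.gC (ℳ.Xtot s)) else 0)) := by
    intro s'
    simp only [Q, lbRate]
    rw [Finset.sum_mul]
    apply Finset.sum_congr rfl
    intro i _
    rw [Finset.sum_mul]
    apply Finset.sum_congr rfl
    intro m _
    simp only [add_mul, ite_mul, zero_mul]
  rw [Finset.sum_congr rfl (fun s' _ => expand s'), Finset.sum_comm]
  have swap2 : ∀ i ∈ Finset.Icc 1 ℳ.b,
      ∑ s' ∈ ℳ.SS, ∑ m ∈ Finset.Icc 1 ℳ.M, ((if s' = arrUpd ℳ.N i m s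
              then lamOf ℳ.N ℳ.α * ℳ.N * (ℳ.A (i-1) m s - ℳ.A i m s)
                * (ℳ.gC (ℳ.Xtot s') - ℳ.gC (ℳ.Xtot s)) else 0)
            + (if s' = depUpd ℳ.N i m s
              then (1 - ℳ.p m) * ℳ.μ m * ℳ.N * (s i m - s (i+1) m)
                * (ℳ.gC (ℳ.Xtot s') - ℳ.gC (ℳ.Xtot s)) else 0)
            + (if s' = phaUpd ℳ.N i m s
              then ℳ.p m * ℳ.μ m * ℳ.N * (s i m - s (i+1) m)
                * (ℳ.gC (ℳ.Xtot s') - ℳ.gC (ℳ.Xtot s)) else 0))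
      = ∑ m ∈ Finset.Icc 1 ℳ.M,
          ((if arrUpd ℳ.N i m s ∈ ℳ.SS
              then lamOf ℳ.N ℳ.α * ℳ.N * (ℳ.A (i-1) m s - ℳ.A i m s)
                * (ℳ.gC (ℳ.Xtot (arrUpd ℳ.N i m s)) - ℳ.gC (ℳ.Xtot s)) else 0)
            + (if depUpd ℳ.N i m s ∈ ℳ.SS
              then (1 - ℳ.p m) * ℳ.μ m * ℳ.N * (s i m - s (i+1) m)
                * (ℳ.gC (ℳ.Xtot (depUpd ℳ.N i m s)) - ℳ.gC (ℳ.Xtot s)) else 0)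
            + (if phaUpd ℳ.N i m s ∈ ℳ.SS
              then ℳ.p m * ℳ.μ m * ℳ.N * (s i m - s (i+1) m)
                * (ℳ.gC (ℳ.Xtot (phaUpd ℳ.N i m s)) - ℳ.gC (ℳ.Xtot s)) else 0)) := by
    intro i _
    rw [Finset.sum_comm]
    apply Finset.sum_congr rfl
    intro m _
    rw [Finset.sum_add_distrib, Finset.sum_add_distrib,
      Finset.sum_ite_eq' ℳ.SS (arrUpd ℳ.N i m s)
        (fun s' => lamOf ℳ.N ℳ.α * ℳ.N * (ℳ.A (i-1) m s - ℳ.A i m s)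
          * (ℳ.gC (ℳ.Xtot s') - ℳ.gC (ℳ.Xtot s))),
      Finset.sum_ite_eq' ℳ.SS (depUpd ℳ.N i m s)
        (fun s' => (1 - ℳ.p m) * ℳ.μ m * ℳ.N * (s i m - s (i+1) m)
          * (ℳ.gC (ℳ.Xtot s') - ℳ.gC (ℳ.Xtot s))),
      Finset.sum_ite_eq' ℳ.SS (phaUpd ℳ.N i m s)
        (fun s' => ℳ.p m * ℳ.μ m * ℳ.N * (s i m - s (i+1) m)
          * (ℳ.gC (ℳ.Xtot s') - ℳ.gC (ℳ.Xtot s)))]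
  rw [Finset.sum_congr rfl swap2]
  have bound : ∀ i ∈ Finset.Icc 1 ℳ.b, ∀ m ∈ Finset.Icc 1 ℳ.M,
      lamOf ℳ.N ℳ.α * ℳ.N * (ℳ.A (i-1) m s - ℳ.A i m s) * cp
        + (1 - ℳ.p m) * ℳ.μ m * ℳ.N * (s i m - s (i+1) m) * cm
      ≤ ((if arrUpd ℳ.N i m s ∈ ℳ.SS
              then lamOf ℳ.N ℳ.α * ℳ.N * (ℳ.A (i-1) m s - ℳ.A i m s)
                * (ℳ.gC (ℳ.Xtot (arrUpd ℳ.N i m s)) - ℳ.gC (ℳ.Xtot s)) else 0)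
            + (if depUpd ℳ.N i m s ∈ ℳ.SS
              then (1 - ℳ.p m) * ℳ.μ m * ℳ.N * (s i m - s (i+1) m)
                * (ℳ.gC (ℳ.Xtot (depUpd ℳ.N i m s)) - ℳ.gC (ℳ.Xtot s)) else 0)
            + (if phaUpd ℳ.N i m s ∈ ℳ.SS
              then ℳ.p m * ℳ.μ m * ℳ.N * (s i m - s (i+1) m)
                * (ℳ.gC (ℳ.Xtot (phaUpd ℳ.N i m s)) - ℳ.gC (ℳ.Xtot s)) else 0)) := by
    intro i hi m hm
    rw [Finset.mem_Icc] at hi hm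
    have hGarr : ℳ.gC (ℳ.Xtot (arrUpd ℳ.N i m s)) - ℳ.gC (ℳ.Xtot s) = cp := by
      rw [ℳ.Xtot_arr (Finset.mem_Icc.mpr hi) (Finset.mem_Icc.mpr hm), hcp]
    have tA : lamOf ℳ.N ℳ.α * ℳ.N * (ℳ.A (i-1) m s - ℳ.A i m s) * cp
        ≤ (if arrUpd ℳ.N i m s ∈ ℳ.SS
            then lamOf ℳ.N ℳ.α * ℳ.N * (ℳ.A (i-1) m s - ℳ.A i m s)
              * (ℳ.gC (ℳ.Xtot (arrUpd ℳ.N i m s)) - ℳ.gC (ℳ.Xtot s)) else 0) := by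
      by_cases hmem : arrUpd ℳ.N i m s ∈ ℳ.SS
      · rw [if_pos hmem, hGarr]
      · rw [if_neg hmem]
        have hr := ℳ.r_nonneg hs (Finset.mem_Icc.mpr hm) hi.1 hi.2
        have hlam : 0 ≤ lamOf ℳ.N ℳ.α := ℳ.lam_nonneg
        have hN0 : (0:ℝ) ≤ ℳ.N := le_of_lt ℳ.NposR
        have hcA : 0 ≤ lamOf ℳ.N ℳ.α * ℳ.N * (ℳ.A (i-1) m s - ℳ.A i m s) := by positivity
        nlinarith
    have tB : (if depUpd ℳ.N i m s ∈ ℳ.SS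
            then (1 - ℳ.p m) * ℳ.μ m * ℳ.N * (s i m - s (i+1) m)
              * (ℳ.gC (ℳ.Xtot (depUpd ℳ.N i m s)) - ℳ.gC (ℳ.Xtot s)) else 0)
        = (1 - ℳ.p m) * ℳ.μ m * ℳ.N * (s i m - s (i+1) m) * cm := by
      by_cases hq : s i m - s (i+1) m = 0
      · rw [hq]
        by_cases hmem : depUpd ℳ.N i m s ∈ ℳ.SS
        · rw [if_pos hmem]; ring
        · rw [if_neg hmem]; ring
      · have hmem := ℳ.dep_mem hs hi.1 hi.2 hm.1 hm.2 hq
        rw [if_pos hmem, ℳ.Xtot_dep (Finset.mem_Icc.mpr hi) (Finset.mem_Icc.mpr hm), hcm]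
    have tC : (if phaUpd ℳ.N i m s ∈ ℳ.SS
            then ℳ.p m * ℳ.μ m * ℳ.N * (s i m - s (i+1) m)
              * (ℳ.gC (ℳ.Xtot (phaUpd ℳ.N i m s)) - ℳ.gC (ℳ.Xtot s)) else 0) = 0 := by
      rcases eq_or_lt_of_le hm.2 with hM | hM
      · have hp0 : ℳ.p m = 0 := by rw [hM, ℳ.hpM]
        rw [hp0]
        by_cases hmem : phaUpd ℳ.N i m s ∈ ℳ.SS
        · rw [if_pos hmem]; ring
        · rw [if_neg hmem]
      · have hx : ℳ.gC (ℳ.Xtot (phaUpd ℳ.N i m s)) - ℳ.gC (ℳ.Xtot s) = 0 := by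
          rw [ℳ.Xtot_pha (Finset.mem_Icc.mpr hi) hm.1 hM]
          ring
        by_cases hmem : phaUpd ℳ.N i m s ∈ ℳ.SS
        · rw [if_pos hmem, hx]; ring
        · rw [if_neg hmem]
    rw [tB, tC]
    linarith
  have hsum := Finset.sum_le_sum (fun i hi => Finset.sum_le_sum (fun m hm => bound i hi m hm))
  refine le_trans ?_ hsum
  have hlamdef : lamOf ℳ.N ℳ.α = ℳ.lam := rfl
  have sumA : ∑ i ∈ Finset.Icc 1 ℳ.b, ∑ m ∈ Finset.Icc 1 ℳ.M,
      (lamOf ℳ.N ℳ.α * ℳ.N * (ℳ.A (i-1) m s - ℳ.A i m s) * cp)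
      = ℳ.lam * ℳ.N * (1 - ℳ.Arow ℳ.b s) * cp := by
    rw [Finset.sum_comm]
    have inner : ∀ m ∈ Finset.Icc 1 ℳ.M,
        ∑ i ∈ Finset.Icc 1 ℳ.b, (lamOf ℳ.N ℳ.α * ℳ.N * (ℳ.A (i-1) m s - ℳ.A i m s) * cp)
        = lamOf ℳ.N ℳ.α * ℳ.N * cp * (ℳ.A 0 m s - ℳ.A ℳ.b m s) := by
      intro m _
      rw [← aux_tele1 ℳ.b (fun i => ℳ.A i m s), Finset.mul_sum]
      apply Finset.sum_congr rfl
      intros; ring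
    rw [Finset.sum_congr rfl inner]
    have hstep : ∑ m ∈ Finset.Icc 1 ℳ.M,
        (lamOf ℳ.N ℳ.α * ℳ.N * cp * (ℳ.A 0 m s - ℳ.A ℳ.b m s))
        = lamOf ℳ.N ℳ.α * ℳ.N * cp *
          ((∑ m ∈ Finset.Icc 1 ℳ.M, ℳ.A 0 m s) - ∑ m ∈ Finset.Icc 1 ℳ.M, ℳ.A ℳ.b m s) := by
      rw [← Finset.sum_sub_distrib, Finset.mul_sum]
    rw [hstep, ℳ.hAsum s hs, hlamdef, Arow]
    ring
  have sumB : ∑ i ∈ Finset.Icc 1 ℳ.b, ∑ m ∈ Finset.Icc 1 ℳ.M,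
      ((1 - ℳ.p m) * ℳ.μ m * ℳ.N * (s i m - s (i+1) m) * cm)
      = ℳ.N * ℳ.D1 s * cm := by
    rw [Finset.sum_comm]
    have inner : ∀ m ∈ Finset.Icc 1 ℳ.M,
        ∑ i ∈ Finset.Icc 1 ℳ.b, ((1 - ℳ.p m) * ℳ.μ m * ℳ.N * (s i m - s (i+1) m) * cm)
        = (1 - ℳ.p m) * ℳ.μ m * ℳ.N * cm * s 1 m := by
      intro m hm
      have htel : ∑ i ∈ Finset.Icc 1 ℳ.b, (s i m - s (i+1) m) = s 1 m := by
        rw [aux_tele2 ℳ.b (fun i => s i m)]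
        rw [ℳ.s_top hs m]
        ring
      rw [← htel, Finset.mul_sum]
      apply Finset.sum_congr rfl
      intros; ring
    rw [Finset.sum_congr rfl inner, D1, Finset.mul_sum, Finset.sum_mul]
    apply Finset.sum_congr rfl
    intros; ring
  have split : ∑ i ∈ Finset.Icc 1 ℳ.b, ∑ m ∈ Finset.Icc 1 ℳ.M,
      (lamOf ℳ.N ℳ.α * ℳ.N * (ℳ.A (i-1) m s - ℳ.A i m s) * cp
        + (1 - ℳ.p m) * ℳ.μ m * ℳ.N * (s i m - s (i+1) m) * cm)
      = (∑ i ∈ Finset.Icc 1 ℳ.b, ∑ m ∈ Finset.Icc 1 ℳ.M,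
          (lamOf ℳ.N ℳ.α * ℳ.N * (ℳ.A (i-1) m s - ℳ.A i m s) * cp))
        + ∑ i ∈ Finset.Icc 1 ℳ.b, ∑ m ∈ Finset.Icc 1 ℳ.M,
          ((1 - ℳ.p m) * ℳ.μ m * ℳ.N * (s i m - s (i+1) m) * cm) := by
    rw [← Finset.sum_add_distrib]
    apply Finset.sum_congr rfl
    intro i _
    rw [← Finset.sum_add_distrib]
  rw [split, sumA, sumB]

end LBModel

namespace LBModel
variable (ℳ : LBModel)

lemma taylor_state {s} (hs : s ∈ ℳ.SS) :
    ℳ.gpC (ℳ.Xtot s) * (ℳ.lam * (1 - ℳ.Arow ℳ.b s) - ℳ.D1 s)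
      - (ℳ.lam + ℳ.μmax) * ((ℳ.N:ℝ)⁻¹ / (2 * ℳ.Del))
    ≤ ℳ.lam * ℳ.N * (1 - ℳ.Arow ℳ.b s) * (ℳ.gC (ℳ.Xtot s + (ℳ.N:ℝ)⁻¹) - ℳ.gC (ℳ.Xtot s))
      + ℳ.N * ℳ.D1 s * (ℳ.gC (ℳ.Xtot s - (ℳ.N:ℝ)⁻¹) - ℳ.gC (ℳ.Xtot s)) := by
  have hδ : (0:ℝ) < (ℳ.N:ℝ)⁻¹ := by have := ℳ.NposR; positivity
  have hΔ := ℳ.Del_pos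
  have hNδ : (ℳ.N:ℝ) * (ℳ.N:ℝ)⁻¹ = 1 := mul_inv_cancel₀ (ne_of_gt ℳ.NposR)
  have e1 := ℳ.gC_taylor (ℳ.Xtot s) (ℳ.Xtot s + (ℳ.N:ℝ)⁻¹)
  rw [add_sub_cancel_left] at e1
  have e2 := ℳ.gC_taylor (ℳ.Xtot s) (ℳ.Xtot s - (ℳ.N:ℝ)⁻¹)
  rw [sub_sub_cancel_left] at e2
  have hsq : (-(ℳ.N:ℝ)⁻¹)^2 = ((ℳ.N:ℝ)⁻¹)^2 := by ring
  rw [hsq] at e2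
  have hK1 : 0 ≤ ℳ.lam * ℳ.N * (1 - ℳ.Arow ℳ.b s) := by
    have h1 := ℳ.lam_nonneg
    have h2 := ℳ.Arow_le_one hs
    have h3 := ℳ.NposR
    have : (0:ℝ) ≤ 1 - ℳ.Arow ℳ.b s := by linarith
    positivity
  have hK2 : 0 ≤ (ℳ.N:ℝ) * ℳ.D1 s := by
    have h1 := ℳ.D1_nonneg hs
    have h3 := ℳ.NposR
    positivity
  have m1 := mul_le_mul_of_nonneg_left e1 hK1
  have m2 := mul_le_mul_of_nonneg_left e2 hK2
  have id1 : ℳ.lam * ℳ.N * (1 - ℳ.Arow ℳ.b s)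
        * (ℳ.gpC (ℳ.Xtot s) * (ℳ.N:ℝ)⁻¹ - ((ℳ.N:ℝ)⁻¹)^2 / (2 * ℳ.Del))
      = ℳ.lam * (1 - ℳ.Arow ℳ.b s) * ℳ.gpC (ℳ.Xtot s)
        - ℳ.lam * (1 - ℳ.Arow ℳ.b s) * ((ℳ.N:ℝ)⁻¹ / (2 * ℳ.Del)) := by
    linear_combination (ℳ.lam * (1 - ℳ.Arow ℳ.b s)
      * (ℳ.gpC (ℳ.Xtot s) - (ℳ.N:ℝ)⁻¹ / (2 * ℳ.Del))) * hNδ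
  have id2 : (ℳ.N:ℝ) * ℳ.D1 s
        * (ℳ.gpC (ℳ.Xtot s) * -(ℳ.N:ℝ)⁻¹ - ((ℳ.N:ℝ)⁻¹)^2 / (2 * ℳ.Del))
      = -(ℳ.D1 s * ℳ.gpC (ℳ.Xtot s)) - ℳ.D1 s * ((ℳ.N:ℝ)⁻¹ / (2 * ℳ.Del)) := by
    linear_combination (ℳ.D1 s * (-ℳ.gpC (ℳ.Xtot s) - (ℳ.N:ℝ)⁻¹ / (2 * ℳ.Del))) * hNδ
  have hbnd : ℳ.lam * (1 - ℳ.Arow ℳ.b s) + ℳ.D1 s ≤ ℳ.lam + ℳ.μmax := by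
    have h1 := mul_nonneg ℳ.lam_nonneg (ℳ.Arow_nonneg hs)
    have h2 := ℳ.D1_le_mumax hs
    nlinarith
  have hpos : (0:ℝ) ≤ (ℳ.N:ℝ)⁻¹ / (2 * ℳ.Del) := by positivity
  have hbnd2 : (ℳ.lam * (1 - ℳ.Arow ℳ.b s) + ℳ.D1 s) * ((ℳ.N:ℝ)⁻¹ / (2 * ℳ.Del))
      ≤ (ℳ.lam + ℳ.μmax) * ((ℳ.N:ℝ)⁻¹ / (2 * ℳ.Del)) :=
    mul_le_mul_of_nonneg_right hbnd hpos
  have id0 : ℳ.gpC (ℳ.Xtot s) * (ℳ.lam * (1 - ℳ.Arow ℳ.b s) - ℳ.D1 s)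
      = ℳ.lam * (1 - ℳ.Arow ℳ.b s) * ℳ.gpC (ℳ.Xtot s) - ℳ.D1 s * ℳ.gpC (ℳ.Xtot s) := by
    ring
  nlinarith [m1, m2, id1, id2, hbnd2, id0]

lemma EP_bound :
    ∑ s ∈ ℳ.SS, ℳ.pi s * (ℳ.gpC (ℳ.Xtot s) * (ℳ.lam * (1 - ℳ.Arow ℳ.b s) - ℳ.D1 s))
      ≤ (ℳ.lam + ℳ.μmax) * ((ℳ.N:ℝ)⁻¹ / (2 * ℳ.Del)) := by
  have h0 := ℳ.gen_zero (fun s' => ℳ.gC (ℳ.Xtot s'))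
  have hle1 : ∑ s ∈ ℳ.SS, ℳ.pi s *
      (ℳ.lam * ℳ.N * (1 - ℳ.Arow ℳ.b s) * (ℳ.gC (ℳ.Xtot s + (ℳ.N:ℝ)⁻¹) - ℳ.gC (ℳ.Xtot s))
        + ℳ.N * ℳ.D1 s * (ℳ.gC (ℳ.Xtot s - (ℳ.N:ℝ)⁻¹) - ℳ.gC (ℳ.Xtot s))) ≤ 0 := by
    rw [← h0]
    apply Finset.sum_le_sum
    intro s hs
    exact mul_le_mul_of_nonneg_left (ℳ.per_state hs) (ℳ.hpi0 s hs)
  have hle2 : ∑ s ∈ ℳ.SS, ℳ.pi s *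
      (ℳ.gpC (ℳ.Xtot s) * (ℳ.lam * (1 - ℳ.Arow ℳ.b s) - ℳ.D1 s)
        - (ℳ.lam + ℳ.μmax) * ((ℳ.N:ℝ)⁻¹ / (2 * ℳ.Del)))
      ≤ ∑ s ∈ ℳ.SS, ℳ.pi s *
      (ℳ.lam * ℳ.N * (1 - ℳ.Arow ℳ.b s) * (ℳ.gC (ℳ.Xtot s + (ℳ.N:ℝ)⁻¹) - ℳ.gC (ℳ.Xtot s))
        + ℳ.N * ℳ.D1 s * (ℳ.gC (ℳ.Xtot s - (ℳ.N:ℝ)⁻¹) - ℳ.gC (ℳ.Xtot s))) := by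
    apply Finset.sum_le_sum
    intro s hs
    exact mul_le_mul_of_nonneg_left (ℳ.taylor_state hs) (ℳ.hpi0 s hs)
  have hsplit : ∑ s ∈ ℳ.SS, ℳ.pi s *
      (ℳ.gpC (ℳ.Xtot s) * (ℳ.lam * (1 - ℳ.Arow ℳ.b s) - ℳ.D1 s)
        - (ℳ.lam + ℳ.μmax) * ((ℳ.N:ℝ)⁻¹ / (2 * ℳ.Del)))
      = (∑ s ∈ ℳ.SS, ℳ.pi s * (ℳ.gpC (ℳ.Xtot s) * (ℳ.lam * (1 - ℳ.Arow ℳ.b s) - ℳ.D1 s)))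
        - (∑ s ∈ ℳ.SS, ℳ.pi s) * ((ℳ.lam + ℳ.μmax) * ((ℳ.N:ℝ)⁻¹ / (2 * ℳ.Del))) := by
    rw [Finset.sum_mul, ← Finset.sum_sub_distrib]
    apply Finset.sum_congr rfl
    intros; ring
  rw [hsplit, ℳ.hpi1, one_mul] at hle2
  linarith

lemma inv_div_Del : (ℳ.N:ℝ)⁻¹ / ℳ.Del = 1 / (Real.sqrt ℳ.N * Real.log ℳ.N) := by
  have h := Real.mul_self_sqrt (le_of_lt ℳ.NposR)
  have hNne : (ℳ.N:ℝ) ≠ 0 := ne_of_gt ℳ.NposR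
  have hl := ne_of_gt ℳ.logN_pos
  have hsl : (0:ℝ) < Real.sqrt ℳ.N * Real.log ℳ.N := mul_pos ℳ.sqrtN_pos ℳ.logN_pos
  rw [Del, div_div_eq_mul_div, div_eq_div_iff hl (ne_of_gt hsl)]
  linear_combination ((ℳ.N:ℝ)⁻¹ * Real.log ℳ.N) * h + Real.log ℳ.N * (inv_mul_cancel₀ hNne)

end LBModel

/-- **Lemma (generator coupling via Stein's method).** With `η = λ + kΔ`,
`h(x) = max{x-η,0}`, `g'(x) = -max{x-η,0}/Δ`, and `D₁ = ∑_m (1-p_m) μ_m S_{1,m}`,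
`𝔼[h(∑ᵢ Sᵢ)] ≤ J₁ + (5 μ_max + λ)/(√N log N)`. -/
theorem lem_generator_coupling (ℳ : LBModel) :
    ℳ.expect (fun s =>
        max ((∑ i ∈ Finset.Icc 1 ℳ.b, ∑ m ∈ Finset.Icc 1 ℳ.M, s i m)
          - (ℳ.lam + ℳ.kc * ℳ.Del)) 0)
      ≤ ℳ.expect (fun s =>
          (-(max ((∑ i ∈ Finset.Icc 1 ℳ.b, ∑ m ∈ Finset.Icc 1 ℳ.M, s i m)
              - (ℳ.lam + ℳ.kc * ℳ.Del)) 0) / ℳ.Del)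
            * (ℳ.lam * ℳ.Arow ℳ.b s - ℳ.lam - ℳ.Del
                + ∑ m ∈ Finset.Icc 1 ℳ.M, (1 - ℳ.p m) * ℳ.μ m * s 1 m)
            * (if (ℳ.lam + ℳ.kc * ℳ.Del) + 1 / (ℳ.N : ℝ)
                  < ∑ i ∈ Finset.Icc 1 ℳ.b, ∑ m ∈ Finset.Icc 1 ℳ.M, s i m
                then 1 else 0))
        + (5 * ℳ.μmax + ℳ.lam) / (Real.sqrt ℳ.N * Real.log ℳ.N) := by
  have hδ : (0:ℝ) < (ℳ.N:ℝ)⁻¹ := by have := ℳ.NposR; positivity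
  have hΔ := ℳ.Del_pos
  have hδ1 : (1:ℝ) / (ℳ.N:ℝ) = (ℳ.N:ℝ)⁻¹ := one_div _
  show (∑ s ∈ ℳ.SS, ℳ.pi s * max (ℳ.Xtot s - ℳ.etaC) 0)
      ≤ (∑ s ∈ ℳ.SS, ℳ.pi s *
          (-(max (ℳ.Xtot s - ℳ.etaC) 0) / ℳ.Del
            * (ℳ.lam * ℳ.Arow ℳ.b s - ℳ.lam - ℳ.Del + ℳ.D1 s)
            * (if ℳ.etaC + 1 / (ℳ.N:ℝ) < ℳ.Xtot s then 1 else 0)))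
        + (5 * ℳ.μmax + ℳ.lam) / (Real.sqrt ℳ.N * Real.log ℳ.N)
  have pointid : ∀ s ∈ ℳ.SS, ℳ.pi s * max (ℳ.Xtot s - ℳ.etaC) 0
      = ℳ.pi s * (ℳ.gpC (ℳ.Xtot s) * (ℳ.lam * (1 - ℳ.Arow ℳ.b s) - ℳ.D1 s))
        + (ℳ.pi s * (-(max (ℳ.Xtot s - ℳ.etaC) 0) / ℳ.Del
            * (ℳ.lam * ℳ.Arow ℳ.b s - ℳ.lam - ℳ.Del + ℳ.D1 s)
            * (if ℳ.etaC + 1 / (ℳ.N:ℝ) < ℳ.Xtot s then 1 else 0))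
          + ℳ.pi s * (-(max (ℳ.Xtot s - ℳ.etaC) 0) / ℳ.Del
              * (ℳ.lam * ℳ.Arow ℳ.b s - ℳ.lam - ℳ.Del + ℳ.D1 s)
            - -(max (ℳ.Xtot s - ℳ.etaC) 0) / ℳ.Del
              * (ℳ.lam * ℳ.Arow ℳ.b s - ℳ.lam - ℳ.Del + ℳ.D1 s)
              * (if ℳ.etaC + 1 / (ℳ.N:ℝ) < ℳ.Xtot s then 1 else 0))) := by
    intro s _
    rw [show -(max (ℳ.Xtot s - ℳ.etaC) 0) / ℳ.Del = ℳ.gpC (ℳ.Xtot s) from rfl]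
    have hid : ℳ.gpC (ℳ.Xtot s) * (-ℳ.Del) = max (ℳ.Xtot s - ℳ.etaC) 0 := by
      rw [LBModel.gpC]
      field_simp
    linear_combination (-ℳ.pi s) * hid
  rw [Finset.sum_congr rfl pointid, Finset.sum_add_distrib]
  rw [Finset.sum_add_distrib]
  have third : ∑ s ∈ ℳ.SS, ℳ.pi s * (-(max (ℳ.Xtot s - ℳ.etaC) 0) / ℳ.Del
        * (ℳ.lam * ℳ.Arow ℳ.b s - ℳ.lam - ℳ.Del + ℳ.D1 s)
      - -(max (ℳ.Xtot s - ℳ.etaC) 0) / ℳ.Del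
        * (ℳ.lam * ℳ.Arow ℳ.b s - ℳ.lam - ℳ.Del + ℳ.D1 s)
        * (if ℳ.etaC + 1 / (ℳ.N:ℝ) < ℳ.Xtot s then 1 else 0))
      ≤ (ℳ.lam + ℳ.Del) * ((ℳ.N:ℝ)⁻¹ / ℳ.Del) := by
    have hc2 : 0 ≤ (ℳ.lam + ℳ.Del) * ((ℳ.N:ℝ)⁻¹ / ℳ.Del) := by
      have := ℳ.lam_nonneg
      positivity
    have per : ∀ s ∈ ℳ.SS, ℳ.pi s * (-(max (ℳ.Xtot s - ℳ.etaC) 0) / ℳ.Del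
          * (ℳ.lam * ℳ.Arow ℳ.b s - ℳ.lam - ℳ.Del + ℳ.D1 s)
        - -(max (ℳ.Xtot s - ℳ.etaC) 0) / ℳ.Del
          * (ℳ.lam * ℳ.Arow ℳ.b s - ℳ.lam - ℳ.Del + ℳ.D1 s)
          * (if ℳ.etaC + 1 / (ℳ.N:ℝ) < ℳ.Xtot s then 1 else 0))
        ≤ ℳ.pi s * ((ℳ.lam + ℳ.Del) * ((ℳ.N:ℝ)⁻¹ / ℳ.Del)) := by
      intro s hs
      apply mul_le_mul_of_nonneg_left _ (ℳ.hpi0 s hs)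
      rw [show -(max (ℳ.Xtot s - ℳ.etaC) 0) / ℳ.Del = ℳ.gpC (ℳ.Xtot s) from rfl]
      by_cases hcond : ℳ.etaC + 1 / (ℳ.N:ℝ) < ℳ.Xtot s
      · rw [if_pos hcond]
        have hz : ℳ.gpC (ℳ.Xtot s) * (ℳ.lam * ℳ.Arow ℳ.b s - ℳ.lam - ℳ.Del + ℳ.D1 s)
            - ℳ.gpC (ℳ.Xtot s) * (ℳ.lam * ℳ.Arow ℳ.b s - ℳ.lam - ℳ.Del + ℳ.D1 s) * 1
            = 0 := by ring
        linarith
      · rw [if_neg hcond]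
        have hxle : ℳ.Xtot s ≤ ℳ.etaC + (ℳ.N:ℝ)⁻¹ := by
          rw [← hδ1]
          exact not_lt.mp hcond
        have hmax0 : 0 ≤ max (ℳ.Xtot s - ℳ.etaC) 0 := le_max_right _ _
        have hmax1 : max (ℳ.Xtot s - ℳ.etaC) 0 ≤ (ℳ.N:ℝ)⁻¹ :=
          max_le (by linarith) (le_of_lt hδ)
        have hgp0 : ℳ.gpC (ℳ.Xtot s) ≤ 0 := by
          rw [LBModel.gpC, neg_div]
          have := div_nonneg hmax0 (le_of_lt hΔ)
          linarith
        have hgpge : -((ℳ.N:ℝ)⁻¹ / ℳ.Del) ≤ ℳ.gpC (ℳ.Xtot s) := by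
          rw [LBModel.gpC, neg_div]
          have := (div_le_div_iff_of_pos_right hΔ).mpr hmax1
          linarith
        have hT_lo : -(ℳ.lam + ℳ.Del)
            ≤ ℳ.lam * ℳ.Arow ℳ.b s - ℳ.lam - ℳ.Del + ℳ.D1 s := by
          have h1 : 0 ≤ ℳ.lam * ℳ.Arow ℳ.b s :=
            mul_nonneg ℳ.lam_nonneg (ℳ.Arow_nonneg hs)
          have h2 := ℳ.D1_nonneg hs
          linarith
        have hprod : 0 ≤ (-(ℳ.gpC (ℳ.Xtot s)))
            * ((ℳ.lam * ℳ.Arow ℳ.b s - ℳ.lam - ℳ.Del + ℳ.D1 s) + (ℳ.lam + ℳ.Del)) :=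
          mul_nonneg (by linarith) (by linarith)
        have hprod2 : (-(ℳ.gpC (ℳ.Xtot s))) * (ℳ.lam + ℳ.Del)
            ≤ ((ℳ.N:ℝ)⁻¹ / ℳ.Del) * (ℳ.lam + ℳ.Del) := by
          apply mul_le_mul_of_nonneg_right (by linarith)
          have := ℳ.lam_nonneg
          linarith
        nlinarith [hprod, hprod2]
    calc ∑ s ∈ ℳ.SS, ℳ.pi s * (-(max (ℳ.Xtot s - ℳ.etaC) 0) / ℳ.Del
          * (ℳ.lam * ℳ.Arow ℳ.b s - ℳ.lam - ℳ.Del + ℳ.D1 s)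
        - -(max (ℳ.Xtot s - ℳ.etaC) 0) / ℳ.Del
          * (ℳ.lam * ℳ.Arow ℳ.b s - ℳ.lam - ℳ.Del + ℳ.D1 s)
          * (if ℳ.etaC + 1 / (ℳ.N:ℝ) < ℳ.Xtot s then 1 else 0))
        ≤ ∑ s ∈ ℳ.SS, ℳ.pi s * ((ℳ.lam + ℳ.Del) * ((ℳ.N:ℝ)⁻¹ / ℳ.Del)) :=
          Finset.sum_le_sum per
      _ = (∑ s ∈ ℳ.SS, ℳ.pi s) * ((ℳ.lam + ℳ.Del) * ((ℳ.N:ℝ)⁻¹ / ℳ.Del)) := by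
          rw [← Finset.sum_mul]
      _ = (ℳ.lam + ℳ.Del) * ((ℳ.N:ℝ)⁻¹ / ℳ.Del) := by rw [ℳ.hpi1, one_mul]
  have harith : (ℳ.lam + ℳ.μmax) * ((ℳ.N:ℝ)⁻¹ / (2 * ℳ.Del))
        + (ℳ.lam + ℳ.Del) * ((ℳ.N:ℝ)⁻¹ / ℳ.Del)
      ≤ (5 * ℳ.μmax + ℳ.lam) / (Real.sqrt ℳ.N * Real.log ℳ.N) := by
    have hcoef : (ℳ.lam + ℳ.μmax) / 2 + (ℳ.lam + ℳ.Del) ≤ 5 * ℳ.μmax + ℳ.lam := by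
      have h1 := ℳ.lam_nonneg
      have h2 := ℳ.lam_le_one
      have h3 := ℳ.Del_le_two
      have h4 := ℳ.mumax_ge_one
      linarith
    have hpos' : (0:ℝ) ≤ (ℳ.N:ℝ)⁻¹ / ℳ.Del := by positivity
    have hrw : (ℳ.lam + ℳ.μmax) * ((ℳ.N:ℝ)⁻¹ / (2 * ℳ.Del))
        + (ℳ.lam + ℳ.Del) * ((ℳ.N:ℝ)⁻¹ / ℳ.Del)
        = ((ℳ.lam + ℳ.μmax) / 2 + (ℳ.lam + ℳ.Del)) * ((ℳ.N:ℝ)⁻¹ / ℳ.Del) := by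
      field_simp
    rw [hrw]
    calc ((ℳ.lam + ℳ.μmax) / 2 + (ℳ.lam + ℳ.Del)) * ((ℳ.N:ℝ)⁻¹ / ℳ.Del)
        ≤ (5 * ℳ.μmax + ℳ.lam) * ((ℳ.N:ℝ)⁻¹ / ℳ.Del) :=
          mul_le_mul_of_nonneg_right hcoef hpos'
      _ = (5 * ℳ.μmax + ℳ.lam) / (Real.sqrt ℳ.N * Real.log ℳ.N) := by
          rw [ℳ.inv_div_Del, mul_one_div]
  have key := ℳ.EP_bound
  linarith [key, third, harith]
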